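/- arXiv:2303.07681 — 7 statements merged into one kernel-verified Lean document; each statement's English description precedes it below -/
import Mathlib

section
/- Let Γ be a finite connected (G,s)-geodesic-transitive digraph for some s ≥ 2, and let N be a normal subgroup of G that is maximal with respect to having at least 3 orbits on V(Γ). Then the quotient digraph Γ_N is connected and (G/N, s')-geodesic-transitive, where s' = min{s, diam(Γ_N)}; the group G/N is either quasiprimitive or bi-quasiprimitive on the vertex set of Γ_N; and Γ_N is either a digraph (i.e. its adjacency relation is antisymmetric) or an undirected complete graph. -/
namespace SGeodesicDigraph

variable {V : Type*}

/-- `p : Fin (n+1) → V` is an `n`-arc of the digraph with adjacency relation `A`. -/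
def IsArcSeq (A : V → V → Prop) (n : ℕ) (p : Fin (n + 1) → V) : Prop :=
  ∀ i : Fin n, A (p i.castSucc) (p i.succ)

/-- The directed distance from `u` to `v`: the length of a shortest directed path. -/
noncomputable def ddist (A : V → V → Prop) (u v : V) : ℕ :=
  sInf {n : ℕ | ∃ p : Fin (n + 1) → V, IsArcSeq A n p ∧ p 0 = u ∧ p (Fin.last n) = v}

/-- `p` is an `n`-geodesic: an `n`-arc whose endpoints are at directed distance `n`. -/
def IsGeodesic (A : V → V → Prop) (n : ℕ) (p : Fin (n + 1) → V) : Prop :=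
  IsArcSeq A n p ∧ ddist A (p 0) (p (Fin.last n)) = n

/-- Connectivity of the underlying undirected graph. -/
def DConnected (A : V → V → Prop) : Prop :=
  ∀ u v : V, Relation.ReflTransGen (fun x y => A x y ∨ A y x) u v

/-- The diameter: the maximum of the directed distances. -/
noncomputable def diam (A : V → V → Prop) : ℕ :=
  sSup {d : ℕ | ∃ u v : V, ddist A u v = d}

/-- The subgroup `G` of permutations of the vertices consists of automorphisms of `A`. -/
def AutActs (A : V → V → Prop) (G : Subgroup (Equiv.Perm V)) : Prop :=
  ∀ g ∈ G, ∀ u v : V, A u v ↔ A (g u) (g v)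

/-- `G` is transitive on the arcs. -/
def ArcTrans (A : V → V → Prop) (G : Subgroup (Equiv.Perm V)) : Prop :=
  ∀ u v x y : V, A u v → A x y → ∃ g ∈ G, g u = x ∧ g v = y

/-- `G` is transitive on the 2-arcs. -/
def TwoArcTrans (A : V → V → Prop) (G : Subgroup (Equiv.Perm V)) : Prop :=
  ∀ u v w u' v' w' : V, A u v → A v w → A u' v' → A v' w' →
    ∃ g ∈ G, g u = u' ∧ g v = v' ∧ g w = w'

/-- `Γ` is `(G,s)`-geodesic-transitive: `G` is transitive on the `i`-geodesics for all `i ≤ s`. -/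
def GeoTrans (A : V → V → Prop) (G : Subgroup (Equiv.Perm V)) (s : ℕ) : Prop :=
  ∀ i ≤ s, ∀ p q : Fin (i + 1) → V, IsGeodesic A i p → IsGeodesic A i q →
    ∃ g ∈ G, ∀ j : Fin (i + 1), g (p j) = q j

/-- every vertex has `k` out-neighbours and `k` in-neighbours. -/
def HasValency (A : V → V → Prop) (k : ℕ) : Prop :=
  ∀ v : V, {u : V | A v u}.ncard = k ∧ {u : V | A u v}.ncard = k

/-- The digraph is a circuit (a directed cycle) on `r ≥ 3` vertices. -/
def IsCircuit (A : V → V → Prop) : Prop :=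
  ∃ r : ℕ, 3 ≤ r ∧ ∃ e : ZMod r ≃ V, ∀ i j : ZMod r, A (e i) (e j) ↔ j = i + 1

/-- `u` and `v` lie in the same `N`-orbit. -/
def SameOrb (N : Subgroup (Equiv.Perm V)) (u v : V) : Prop := ∃ n ∈ N, n u = v

/-- `N` is transitive on the vertex set. -/
def SubTrans (N : Subgroup (Equiv.Perm V)) : Prop := ∀ u v : V, SameOrb N u v

/-- `N` is regular on the vertex set: transitive with trivial point stabilizers. -/
def SubRegular (N : Subgroup (Equiv.Perm V)) : Prop :=
  SubTrans N ∧ ∀ n ∈ N, ∀ v : V, n v = v → n = 1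

/-- `N` is a normal subgroup of `G`. -/
def NormalIn (N G : Subgroup (Equiv.Perm V)) : Prop :=
  N ≤ G ∧ ∀ g ∈ G, ∀ n ∈ N, g * n * g⁻¹ ∈ N

/-- `N` has at least three orbits on the vertex set. -/
def AtLeastThreeOrbits (N : Subgroup (Equiv.Perm V)) : Prop :=
  ∃ u v w : V, ¬ SameOrb N u v ∧ ¬ SameOrb N u w ∧ ¬ SameOrb N v w

/-- `N` has at most two orbits on the vertex set. -/
def AtMostTwoOrbits (N : Subgroup (Equiv.Perm V)) : Prop :=
  ∃ u v : V, ∀ w : V, SameOrb N u w ∨ SameOrb N v w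

/-- `N` has exactly two orbits on the vertex set. -/
def ExactlyTwoOrbits (N : Subgroup (Equiv.Perm V)) : Prop :=
  AtMostTwoOrbits N ∧ ¬ SubTrans N

/-- The `N`-orbit of `v`. -/
def orb (N : Subgroup (Equiv.Perm V)) (v : V) : Set V := {u : V | SameOrb N v u}

/-- The vertex set of the quotient digraph `Γ_N`: the `N`-orbits. -/
abbrev OrbV (N : Subgroup (Equiv.Perm V)) : Type _ := {S : Set V // ∃ v : V, S = orb N v}

/-- The adjacency relation of the quotient digraph `Γ_N`: `(A,B)` is an arc iff some
`a ∈ A`, `b ∈ B` form an arc of `Γ`. -/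
def QRel (A : V → V → Prop) (N : Subgroup (Equiv.Perm V)) (S T : OrbV N) : Prop :=
  ∃ a ∈ S.1, ∃ b ∈ T.1, A a b

/-- `G/N` (acting via `G`, with `g` sending each orbit to its image) is transitive on the
`i`-geodesics of the quotient digraph `Γ_N` for all `i ≤ s`. -/
def QuotGeoTrans (A : V → V → Prop) (G N : Subgroup (Equiv.Perm V)) (s : ℕ) : Prop :=
  ∀ i ≤ s, ∀ p q : Fin (i + 1) → OrbV N,
    IsGeodesic (QRel A N) i p → IsGeodesic (QRel A N) i q →
      ∃ g ∈ G, ∀ j : Fin (i + 1), ⇑g '' (p j).1 = (q j).1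

/-- `G/N` is transitive on the arcs of the quotient digraph `Γ_N`. -/
def QuotArcTrans (A : V → V → Prop) (G N : Subgroup (Equiv.Perm V)) : Prop :=
  ∀ S T S' T' : OrbV N, QRel A N S T → QRel A N S' T' →
    ∃ g ∈ G, ⇑g '' S.1 = S'.1 ∧ ⇑g '' T.1 = T'.1

/-- `G/N` is quasiprimitive on the `N`-orbits: by the correspondence theorem, the nontrivial
normal subgroups of `G/N` are exactly the `M/N` with `N < M` normal in `G`, and (as `N ≤ M`)
`M/N` is transitive on the `N`-orbits iff `M` is transitive on the vertices. -/
def QuasiprimitiveQuotient (G N : Subgroup (Equiv.Perm V)) : Prop :=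
  ∀ M : Subgroup (Equiv.Perm V), NormalIn M G → N < M → SubTrans M

/-- `G/N` is bi-quasiprimitive on the `N`-orbits: every nontrivial normal subgroup `M/N` of
`G/N` has at most two orbits, and some nontrivial normal subgroup has exactly two orbits. -/
def BiQuasiprimitiveQuotient (G N : Subgroup (Equiv.Perm V)) : Prop :=
  (∀ M : Subgroup (Equiv.Perm V), NormalIn M G → N < M → AtMostTwoOrbits M) ∧
  (∃ M : Subgroup (Equiv.Perm V), NormalIn M G ∧ N < M ∧ ExactlyTwoOrbits M)

/-- The permutation group `G` is quasiprimitive on the vertex set. -/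
def Quasiprimitive (G : Subgroup (Equiv.Perm V)) : Prop :=
  SubTrans G ∧ ∀ M : Subgroup (Equiv.Perm V), NormalIn M G → M ≠ ⊥ → SubTrans M

/-- The permutation group `G` is bi-quasiprimitive on the vertex set. -/
def BiQuasiprimitive (G : Subgroup (Equiv.Perm V)) : Prop :=
  SubTrans G ∧ (∀ M : Subgroup (Equiv.Perm V), NormalIn M G → M ≠ ⊥ → AtMostTwoOrbits M) ∧
  ∃ M : Subgroup (Equiv.Perm V), NormalIn M G ∧ M ≠ ⊥ ∧ ExactlyTwoOrbits M

section Aux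

variable {W : Type*}

lemma ddist_self (R : W → W → Prop) (u : W) : ddist R u u = 0 :=
  Nat.sInf_eq_zero.mpr (Or.inl ⟨fun _ => u, fun i => i.elim0, rfl, rfl⟩)

lemma isGeodesic_zero (R : W → W → Prop) (u : W) : IsGeodesic R 0 (fun _ => u) :=
  ⟨fun i => i.elim0, ddist_self R u⟩

lemma isGeodesic_one {R : W → W → Prop} {u v : W} (h : R u v) (hirr : ∀ w, ¬ R w w) :
    IsGeodesic R 1 ![u, v] := by
  have harc : IsArcSeq R 1 ![u, v] := by
    intro i; fin_cases i; simpa using h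
  refine ⟨harc, ?_⟩
  have h1 : (1 : ℕ) ∈ {n : ℕ | ∃ p : Fin (n + 1) → W,
      IsArcSeq R n p ∧ p 0 = ![u, v] 0 ∧ p (Fin.last n) = ![u, v] (Fin.last 1)} :=
    ⟨![u, v], harc, rfl, rfl⟩
  refine le_antisymm (Nat.sInf_le h1) (le_csInf ⟨1, h1⟩ ?_)
  rintro m ⟨p, hp, h0, hl⟩
  rcases m with - | m
  · exfalso
    have huv : u = v := by
      have : p 0 = p (Fin.last 0) := rfl
      rw [h0, hl] at this
      simpa using this
    exact hirr u (by rw [huv] at h ⊢; exact h)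
  · omega

lemma isGeodesic_two {R : W → W → Prop} {x y z : W} (hxy : R x y) (hyz : R y z)
    (hnxz : ¬ R x z) (hne : x ≠ z) : IsGeodesic R 2 ![x, y, z] := by
  have harc : IsArcSeq R 2 ![x, y, z] := by
    intro i; fin_cases i
    · simpa using hxy
    · simpa using hyz
  refine ⟨harc, ?_⟩
  have h2 : (2 : ℕ) ∈ {n : ℕ | ∃ p : Fin (n + 1) → W,
      IsArcSeq R n p ∧ p 0 = ![x, y, z] 0 ∧ p (Fin.last n) = ![x, y, z] (Fin.last 2)} :=
    ⟨![x, y, z], harc, rfl, rfl⟩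
  refine le_antisymm (Nat.sInf_le h2) (le_csInf ⟨2, h2⟩ ?_)
  rintro m ⟨p, hp, h0, hl⟩
  have h0' : p 0 = x := by simpa using h0
  have hl' : p (Fin.last m) = z := by simpa using hl
  rcases m with - | m
  · exfalso
    exact hne (by rw [← h0', ← hl']; rfl)
  rcases m with - | m
  · exfalso
    have := hp 0
    simp only [Fin.castSucc_zero, Fin.succ_zero_eq_one] at this
    rw [h0'] at this
    have hlast : p (Fin.last 1) = p 1 := rfl
    rw [hl'] at hlast
    exact hnxz (by rw [← hlast] at this; exact this)
  · omega

end Aux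

section OrbAux

variable {V : Type*}

lemma sameOrb_refl (N : Subgroup (Equiv.Perm V)) (v : V) : SameOrb N v v :=
  ⟨1, N.one_mem, by simp⟩

lemma sameOrb_symm {N : Subgroup (Equiv.Perm V)} {u v : V} (h : SameOrb N u v) :
    SameOrb N v u := by
  obtain ⟨n, hn, rfl⟩ := h
  exact ⟨n⁻¹, N.inv_mem hn, by simp⟩

lemma sameOrb_trans {N : Subgroup (Equiv.Perm V)} {u v w : V} (h1 : SameOrb N u v)
    (h2 : SameOrb N v w) : SameOrb N u w := by
  obtain ⟨n, hn, rfl⟩ := h1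
  obtain ⟨m, hm, rfl⟩ := h2
  exact ⟨m * n, N.mul_mem hm hn, by simp [Equiv.Perm.mul_apply]⟩

lemma mem_orb_self (N : Subgroup (Equiv.Perm V)) (v : V) : v ∈ orb N v := sameOrb_refl N v

lemma orb_eq_of_mem {N : Subgroup (Equiv.Perm V)} {u v : V} (h : u ∈ orb N v) :
    orb N v = orb N u :=
  Set.ext fun w => ⟨fun hw => sameOrb_trans (sameOrb_symm h) hw, fun hw => sameOrb_trans h hw⟩

lemma orbv_eq {N : Subgroup (Equiv.Perm V)} (X : OrbV N) {x : V} (hx : x ∈ X.1) :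
    X.1 = orb N x := by
  obtain ⟨v, hv⟩ := X.2
  rw [hv] at hx ⊢
  exact orb_eq_of_mem hx

/-- projection to the quotient. -/
def projOrb (N : Subgroup (Equiv.Perm V)) (v : V) : OrbV N := ⟨orb N v, v, rfl⟩

lemma projOrb_eq {N : Subgroup (Equiv.Perm V)} {X : OrbV N} {x : V} (hx : x ∈ X.1) :
    projOrb N x = X := Subtype.ext (orbv_eq X hx).symm

lemma proj_arcSeq (A : V → V → Prop) (N : Subgroup (Equiv.Perm V)) {i : ℕ}
    {pa : Fin (i + 1) → V} (hpa : IsArcSeq A i pa) :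
    IsArcSeq (QRel A N) i (fun j => projOrb N (pa j)) :=
  fun j => ⟨pa j.castSucc, mem_orb_self N _, pa j.succ, mem_orb_self N _, hpa j⟩

lemma image_orb {G N : Subgroup (Equiv.Perm V)} {g : Equiv.Perm V} (hg : g ∈ G)
    (hNG : NormalIn N G) (a : V) : ⇑g '' orb N a = orb N (g a) := by
  ext x
  constructor
  · rintro ⟨y, ⟨n, hn, rfl⟩, rfl⟩
    exact ⟨g * n * g⁻¹, hNG.2 g hg n hn, by simp [Equiv.Perm.mul_apply]⟩
  · rintro ⟨m, hm, rfl⟩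
    refine ⟨(g⁻¹ * m * g) a, ⟨g⁻¹ * m * g, ?_, rfl⟩, ?_⟩
    · simpa using hNG.2 g⁻¹ (G.inv_mem hg) m hm
    · simp [Equiv.Perm.mul_apply]

lemma lift_arc {A : V → V → Prop} {N : Subgroup (Equiv.Perm V)}
    (hNaut : ∀ n ∈ N, ∀ u v : V, A u v ↔ A (n u) (n v))
    {S T : OrbV N} (hST : QRel A N S T) {a : V} (ha : a ∈ S.1) :
    ∃ b ∈ T.1, A a b := by
  obtain ⟨a', ha', b', hb', hab⟩ := hST
  have h1 : a ∈ orb N a' := (orbv_eq S ha') ▸ ha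
  obtain ⟨n, hn, hna⟩ := h1
  refine ⟨n b', ?_, ?_⟩
  · rw [orbv_eq T hb']
    exact ⟨n, hn, rfl⟩
  · rw [← hna]
    exact (hNaut n hn a' b').mp hab

open Classical in
noncomputable def liftF {V : Type*} (A : V → V → Prop) {N : Subgroup (Equiv.Perm V)} {i : ℕ}
    (p : Fin (i + 1) → OrbV N) (a₀ : V) : ℕ → V
  | 0 => a₀
  | k + 1 =>
    if h : ∃ b ∈ (p ⟨min (k + 1) i, Nat.lt_succ_of_le (min_le_right _ _)⟩).1,
        A (liftF A p a₀ k) b then h.choose else liftF A p a₀ k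

lemma liftF_mem {A : V → V → Prop} {N : Subgroup (Equiv.Perm V)}
    (hNaut : ∀ n ∈ N, ∀ u v : V, A u v ↔ A (n u) (n v)) {i : ℕ}
    {p : Fin (i + 1) → OrbV N} (hp : IsArcSeq (QRel A N) i p) {a₀ : V}
    (h0 : a₀ ∈ (p 0).1) :
    ∀ k (hk : k ≤ i), liftF A p a₀ k ∈ (p ⟨k, Nat.lt_succ_of_le hk⟩).1 := by
  intro k
  induction k with
  | zero =>
    intro hk
    have e : (⟨0, Nat.lt_succ_of_le hk⟩ : Fin (i + 1)) = 0 := Fin.ext (by simp)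
    rw [e]
    exact h0
  | succ k ih =>
    intro hk
    have hk' : k ≤ i := by omega
    have hmem := ih hk'
    have harc := hp ⟨k, by omega⟩
    simp only [Fin.castSucc_mk, Fin.succ_mk] at harc
    have hex : ∃ b ∈ (p ⟨min (k + 1) i, Nat.lt_succ_of_le (min_le_right _ _)⟩).1,
        A (liftF A p a₀ k) b := by
      have e : (⟨min (k + 1) i, Nat.lt_succ_of_le (min_le_right _ _)⟩ : Fin (i + 1)) =
          ⟨k + 1, Nat.lt_succ_of_le hk⟩ := Fin.ext (by simp [Nat.min_eq_left hk])
      rw [e]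
      exact lift_arc hNaut harc hmem
    rw [liftF, dif_pos hex]
    have e : (⟨min (k + 1) i, Nat.lt_succ_of_le (min_le_right _ _)⟩ : Fin (i + 1)) =
        ⟨k + 1, Nat.lt_succ_of_le hk⟩ := Fin.ext (by simp [Nat.min_eq_left hk])
    rw [← e]
    exact hex.choose_spec.1

lemma liftF_step {A : V → V → Prop} {N : Subgroup (Equiv.Perm V)}
    (hNaut : ∀ n ∈ N, ∀ u v : V, A u v ↔ A (n u) (n v)) {i : ℕ}
    {p : Fin (i + 1) → OrbV N} (hp : IsArcSeq (QRel A N) i p) {a₀ : V}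
    (h0 : a₀ ∈ (p 0).1) :
    ∀ k, k < i → A (liftF A p a₀ k) (liftF A p a₀ (k + 1)) := by
  intro k hk
  have hmem := liftF_mem hNaut hp h0 k (le_of_lt hk)
  have harc := hp ⟨k, hk⟩
  simp only [Fin.castSucc_mk, Fin.succ_mk] at harc
  have hex : ∃ b ∈ (p ⟨min (k + 1) i, Nat.lt_succ_of_le (min_le_right _ _)⟩).1,
      A (liftF A p a₀ k) b := by
    have e : (⟨min (k + 1) i, Nat.lt_succ_of_le (min_le_right _ _)⟩ : Fin (i + 1)) =
        ⟨k + 1, Nat.lt_succ_of_le hk⟩ := Fin.ext (by simp [Nat.min_eq_left hk])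
    rw [e]
    exact lift_arc hNaut harc hmem
  rw [liftF, dif_pos hex]
  exact hex.choose_spec.2

lemma exists_lift {A : V → V → Prop} {N : Subgroup (Equiv.Perm V)}
    (hNaut : ∀ n ∈ N, ∀ u v : V, A u v ↔ A (n u) (n v)) {i : ℕ}
    (p : Fin (i + 1) → OrbV N) (hp : IsArcSeq (QRel A N) i p) {a₀ : V}
    (h0 : a₀ ∈ (p 0).1) :
    ∃ pa : Fin (i + 1) → V, IsArcSeq A i pa ∧ pa 0 = a₀ ∧ ∀ j, pa j ∈ (p j).1 := by
  refine ⟨fun j => liftF A p a₀ j.val, ?_, ?_, ?_⟩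
  · intro j
    have := liftF_step hNaut hp h0 j.val j.isLt
    simpa using this
  · simp only [Fin.val_zero]
    rfl
  · intro j
    have := liftF_mem hNaut hp h0 j.val (by omega)
    have e : (⟨j.val, Nat.lt_succ_of_le (by omega)⟩ : Fin (i + 1)) = j := Fin.ext rfl
    rwa [e] at this

end OrbAux

/-- **Theorem 1.1.** Let `Γ` be a finite connected `(G,s)`-geodesic-transitive digraph for some
`s ≥ 2`, and let `N` be a normal subgroup of `G` maximal with respect to having at least `3`
orbits on the vertices. Then the quotient digraph `Γ_N` is connected and
`(G/N, min s (diam Γ_N))`-geodesic-transitive, `G/N` is quasiprimitive or bi-quasiprimitive on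
the vertex set of `Γ_N`, and `Γ_N` is either a digraph (antisymmetric adjacency) or an
undirected complete graph. -/
theorem quotient_reduction {V : Type*} [Fintype V] (A : V → V → Prop)
    (G N : Subgroup (Equiv.Perm V)) (s : ℕ)
    (hA : ∀ u v : V, A u v → ¬ A v u)
    (hconn : DConnected A)
    (hGaut : AutActs A G)
    (hgt : GeoTrans A G s) (hs : 2 ≤ s)
    (hNG : NormalIn N G)
    (h3 : AtLeastThreeOrbits N)
    (hmax : ∀ M : Subgroup (Equiv.Perm V), NormalIn M G → N < M → ¬ AtLeastThreeOrbits M) :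
    DConnected (QRel A N) ∧
    QuotGeoTrans A G N (min s (diam (QRel A N))) ∧
    (QuasiprimitiveQuotient G N ∨ BiQuasiprimitiveQuotient G N) ∧
    ((∀ S T : OrbV N, QRel A N S T → ¬ QRel A N T S) ∨
      (∀ S T : OrbV N, S ≠ T → QRel A N S T)) := by
  classical
  have hirr : ∀ u : V, ¬ A u u := fun u h => hA u u h h
  have hNaut : ∀ n ∈ N, ∀ u v : V, A u v ↔ A (n u) (n v) := fun n hn => hGaut n (hNG.1 hn)
  -- connectivity of the quotient
  have hqconn : DConnected (QRel A N) := by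
    intro S T
    obtain ⟨u, hu⟩ := S.2
    obtain ⟨v, hv⟩ := T.2
    have hS : projOrb N u = S := Subtype.ext hu.symm
    have hT : projOrb N v = T := Subtype.ext hv.symm
    rw [← hS, ← hT]
    refine Relation.ReflTransGen.lift (projOrb N) ?_ u v (hconn u v)
    rintro a b (hab | hba)
    · exact Or.inl ⟨a, mem_orb_self N a, b, mem_orb_self N b, hab⟩
    · exact Or.inr ⟨b, mem_orb_self N b, a, mem_orb_self N a, hba⟩
  -- lifting quotient geodesics to geodesics
  have hliftgeo : ∀ i : ℕ, ∀ p : Fin (i + 1) → OrbV N, IsGeodesic (QRel A N) i p →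
      ∃ pa : Fin (i + 1) → V, IsGeodesic A i pa ∧ ∀ j, pa j ∈ (p j).1 := by
    intro i p hp
    obtain ⟨v0, hv0⟩ := (p 0).2
    have h0 : v0 ∈ (p 0).1 := by rw [hv0]; exact mem_orb_self N v0
    obtain ⟨pa, harc, hpa0, hmem⟩ := exists_lift hNaut p hp.1 h0
    refine ⟨pa, ⟨harc, ?_⟩, hmem⟩
    refine le_antisymm (Nat.sInf_le ⟨pa, harc, rfl, rfl⟩)
      (le_csInf ⟨i, pa, harc, rfl, rfl⟩ ?_)
    rintro m ⟨q, hq, hq0, hql⟩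
    by_contra hlt
    push_neg at hlt
    have hproj := proj_arcSeq A N hq
    have hle : ddist (QRel A N) (p 0) (p (Fin.last i)) ≤ m := by
      have e0 : projOrb N (q 0) = p 0 := by rw [hq0]; exact projOrb_eq (hmem 0)
      have el : projOrb N (q (Fin.last m)) = p (Fin.last i) := by
        rw [hql]; exact projOrb_eq (hmem _)
      exact Nat.sInf_le ⟨fun j => projOrb N (q j), hproj, e0, el⟩
    rw [hp.2] at hle
    omega
  -- geodesic transitivity of the quotient
  have hqgt : QuotGeoTrans A G N (min s (diam (QRel A N))) := by
    intro i hi p q hp hq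
    have his : i ≤ s := le_trans hi (min_le_left _ _)
    obtain ⟨pa, hpg, hpm⟩ := hliftgeo i p hp
    obtain ⟨qa, hqg, hqm⟩ := hliftgeo i q hq
    obtain ⟨g, hg, hgj⟩ := hgt i his pa qa hpg hqg
    refine ⟨g, hg, fun j => ?_⟩
    rw [orbv_eq (p j) (hpm j), orbv_eq (q j) (hqm j), image_orb hg hNG, hgj j]
  -- quasiprimitive or bi-quasiprimitive
  have hqp : QuasiprimitiveQuotient G N ∨ BiQuasiprimitiveQuotient G N := by
    have hatmost : ∀ M : Subgroup (Equiv.Perm V), NormalIn M G → N < M → AtMostTwoOrbits M := by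
      intro M hM hNM
      have h := hmax M hM hNM
      unfold AtLeastThreeOrbits at h
      push_neg at h
      obtain ⟨u, -, -, -, -, -⟩ := h3
      by_cases ht : SubTrans M
      · exact ⟨u, u, fun w => Or.inl (ht u w)⟩
      · unfold SubTrans at ht
        push_neg at ht
        obtain ⟨x, y, hxy⟩ := ht
        refine ⟨x, y, fun w => ?_⟩
        by_cases hxw : SameOrb M x w
        · exact Or.inl hxw
        · exact Or.inr (h x y w hxy hxw)
    by_cases hq : ∀ M : Subgroup (Equiv.Perm V), NormalIn M G → N < M → SubTrans M
    · exact Or.inl hq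
    · push_neg at hq
      obtain ⟨M, hM1, hM2, hM3⟩ := hq
      exact Or.inr ⟨hatmost, M, hM1, hM2, hatmost M hM1 hM2, hM3⟩
  -- arc transitivity of the original digraph
  have harcT : ∀ u v x y : V, A u v → A x y → ∃ g ∈ G, g u = x ∧ g v = y := by
    intro u v x y huv hxy
    obtain ⟨g, hg, hj⟩ := hgt 1 (by omega) ![u, v] ![x, y]
      (isGeodesic_one huv hirr) (isGeodesic_one hxy hirr)
    refine ⟨g, hg, ?_, ?_⟩
    · have := hj 0; simpa using this
    · have := hj 1; simpa using this
  -- transport of quotient arcs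
  have htrans : ∀ g : Equiv.Perm V, g ∈ G → ∀ X Y X' Y' : OrbV N, QRel A N X Y →
      ⇑g '' X.1 = X'.1 → ⇑g '' Y.1 = Y'.1 → QRel A N X' Y' := by
    rintro g hg X Y X' Y' ⟨a, ha, b, hb, hab⟩ hX hY
    exact ⟨g a, hX ▸ ⟨a, ha, rfl⟩, g b, hY ▸ ⟨b, hb, rfl⟩, (hGaut g hg a b).mp hab⟩
  -- arc transitivity of the quotient
  have hqarcT : ∀ X Y X' Y' : OrbV N, QRel A N X Y → QRel A N X' Y' →
      ∃ g ∈ G, ⇑g '' X.1 = X'.1 ∧ ⇑g '' Y.1 = Y'.1 := by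
    rintro X Y X' Y' ⟨a, ha, b, hb, hab⟩ ⟨a', ha', b', hb', hab'⟩
    obtain ⟨g, hg, hga, hgb⟩ := harcT a b a' b' hab hab'
    refine ⟨g, hg, ?_, ?_⟩
    · rw [orbv_eq X ha, image_orb hg hNG, hga, ← orbv_eq X' ha']
    · rw [orbv_eq Y hb, image_orb hg hNG, hgb, ← orbv_eq Y' hb']
  -- the quotient has no loops
  have hnoloop : ∀ S : OrbV N, ¬ QRel A N S S := by
    intro S hSS
    have hall : ∀ X Y : OrbV N, QRel A N X Y → X = Y := by
      intro X Y hXY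
      obtain ⟨g, hg, h1, h2⟩ := hqarcT S S X Y hSS hXY
      exact Subtype.ext (h1.symm.trans h2)
    obtain ⟨u, v, w, huv, -, -⟩ := h3
    have hkey : ∀ X Y : OrbV N,
        Relation.ReflTransGen (fun X Y : OrbV N => QRel A N X Y ∨ QRel A N Y X) X Y →
        X = Y := by
      intro X Y h
      induction h with
      | refl => rfl
      | tail h1 h2 ih =>
        rcases h2 with h2 | h2
        · exact ih.trans (hall _ _ h2)
        · exact ih.trans (hall _ _ h2).symm
    have heq : projOrb N u = projOrb N v := hkey _ _ (hqconn _ _)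
    apply huv
    have horb : orb N u = orb N v := congrArg Subtype.val heq
    have : v ∈ orb N u := by rw [horb]; exact mem_orb_self N v
    exact this
  -- the dichotomy
  have hdich : (∀ S T : OrbV N, QRel A N S T → ¬ QRel A N T S) ∨
      (∀ S T : OrbV N, S ≠ T → QRel A N S T) := by
    by_cases hex : ∃ S T : OrbV N, QRel A N S T ∧ QRel A N T S
    · right
      obtain ⟨S, T, hST, hTS⟩ := hex
      obtain ⟨a, ha, b, hb, hab⟩ := hST
      obtain ⟨a', ha', hba'⟩ := lift_arc hNaut hTS hb
      have hnaa' : ¬ A a a' := fun h => hnoloop S ⟨a, ha, a', ha', h⟩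
      have hnea : a ≠ a' := fun h => hA a b hab (by rw [h]; exact hba')
      have hg2 : IsGeodesic A 2 ![a, b, a'] := isGeodesic_two hab hba' hnaa' hnea
      have hend : ∀ r : Fin 3 → V, IsGeodesic A 2 r → orb N (r 0) = orb N (r (Fin.last 2)) := by
        intro r hr
        obtain ⟨g, hg, hj⟩ := hgt 2 hs ![a, b, a'] r hg2 hr
        have h0 : g a = r 0 := by have := hj 0; simpa using this
        have h2 : g a' = r (Fin.last 2) := by have := hj 2; simpa [Fin.last] using this
        have e1 : orb N a = orb N a' := (orbv_eq S ha).symm.trans (orbv_eq S ha')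
        calc orb N (r 0) = ⇑g '' orb N a := by rw [image_orb hg hNG, h0]
          _ = ⇑g '' orb N a' := by rw [e1]
          _ = orb N (r (Fin.last 2)) := by rw [image_orb hg hNG, h2]
      have hSab : QRel A N S T := ⟨a, ha, b, hb, hab⟩
      have hsymm : ∀ X Y : OrbV N, QRel A N X Y → QRel A N Y X := by
        intro X Y hXY
        obtain ⟨g, hg, h1, h2⟩ := hqarcT S T X Y hSab hXY
        exact htrans g hg T S Y X hTS h2 h1
      have htri : ∀ X Y Z : OrbV N, QRel A N X Y → QRel A N Y Z → X ≠ Z → QRel A N X Z := by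
        intro X Y Z hXY hYZ hne
        by_contra hnXZ
        obtain ⟨x, hx, y, hy, hxy⟩ := hXY
        obtain ⟨z, hz, hyz⟩ := lift_arc hNaut hYZ hy
        have h1 : ¬ A x z := fun h => hnXZ ⟨x, hx, z, hz, h⟩
        have h2 : x ≠ z := by
          intro h
          exact hne (Subtype.ext (by rw [orbv_eq X hx, orbv_eq Z hz, h]))
        have hgg := hend ![x, y, z] (isGeodesic_two hxy hyz h1 h2)
        apply hne
        refine Subtype.ext ?_
        rw [orbv_eq X hx, orbv_eq Z hz]
        simpa using hgg
      have key : ∀ X Y' : OrbV N,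
          Relation.ReflTransGen (fun X Y : OrbV N => QRel A N X Y ∨ QRel A N Y X) X Y' →
          X = Y' ∨ QRel A N X Y' := by
        intro X Y' h
        induction h with
        | refl => exact Or.inl rfl
        | @tail b c h1 h2 ih =>
          have hstep : QRel A N b c := by
            rcases h2 with h2 | h2
            · exact h2
            · exact hsymm _ _ h2
          rcases ih with rfl | hX
          · exact Or.inr hstep
          · by_cases hXc : X = c
            · exact Or.inl hXc
            · exact Or.inr (htri X b c hX hstep hXc)
      intro X Y hXY
      rcases key X Y (hqconn X Y) with rfl | h
      · exact absurd rfl hXY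
      · exact h
    · left
      push_neg at hex
      exact hex
  exact ⟨hqconn, hqgt, hqp, hdich⟩

end SGeodesicDigraph
end

section
/- Let Γ be a finite G-arc-transitive digraph of valency at most 5 (and at least 2). Then Γ is (G,2)-geodesic-transitive if and only if Γ is (G,2)-arc-transitive. -/
namespace SGeodesicDigraph

variable {V : Type*}

/- ### Auxiliary lemmas for `small_valency_iff` -/

lemma aux_degree_bound {V : Type*} [Fintype V] {A : V → V → Prop}
    (hA : ∀ u v : V, A u v → ¬ A v u)
    (U : Set V) {a k : ℕ} (hk : U.ncard = k) (hne : U.Nonempty)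
    (hdeg : ∀ x ∈ U, ({y | A x y} ∩ U).ncard = a) : 2 * a + 1 ≤ k := by
  classical
  set F : Finset V := (Set.toFinite U).toFinset with hF
  have hmemF : ∀ x, x ∈ F ↔ x ∈ U := fun x => Set.Finite.mem_toFinset _
  have hFcard : F.card = k := by rw [← hk, Set.ncard_eq_toFinset_card U (Set.toFinite U)]
  have hirr : ∀ x, ¬ A x x := fun x h => hA x x h h
  set arcs : Finset (V × V) := F.offDiag.filter (fun p => A p.1 p.2) with harcs
  have harcs_eq : arcs = F.biUnion (fun x => (F.filter (fun y => A x y)).image (Prod.mk x)) := by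
    ext ⟨x, y⟩
    simp only [harcs, Finset.mem_filter, Finset.mem_offDiag, Finset.mem_biUnion,
      Finset.mem_image, Prod.mk.injEq]
    constructor
    · rintro ⟨⟨hx, hy, hxy⟩, hAxy⟩
      exact ⟨x, hx, y, ⟨hy, hAxy⟩, rfl, rfl⟩
    · rintro ⟨x', hx', y', ⟨hy', hAxy⟩, rfl, rfl⟩
      exact ⟨⟨hx', hy', fun h => hirr x' (h ▸ hAxy)⟩, hAxy⟩
  have hfilter_card : ∀ x ∈ F, (F.filter (fun y => A x y)).card = a := by
    intro x hx
    have h : ({y | A x y} ∩ U).ncard = (F.filter (fun y => A x y)).card := by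
      rw [Set.ncard_eq_toFinset_card _ (Set.toFinite _)]
      congr 1
      ext y
      simp only [Set.Finite.mem_toFinset, Set.mem_inter_iff, Set.mem_setOf_eq,
        Finset.mem_filter, hmemF y]
      exact And.comm
    rw [← h, hdeg x ((hmemF x).mp hx)]
  have hdisjoint : ∀ x ∈ F, ∀ y ∈ F, x ≠ y →
      Disjoint ((F.filter (fun z => A x z)).image (Prod.mk x))
        ((F.filter (fun z => A y z)).image (Prod.mk y)) := by
    intro x hx y hy hxy
    refine Finset.disjoint_left.mpr ?_
    rintro p hp hq
    rw [Finset.mem_image] at hp hq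
    obtain ⟨y1, _, rfl⟩ := hp
    obtain ⟨y2, _, heq⟩ := hq
    exact hxy (congrArg Prod.fst heq).symm
  have hcard_arcs : arcs.card = a * k := by
    rw [harcs_eq, Finset.card_biUnion hdisjoint]
    have hc : ∀ x ∈ F, ((F.filter (fun y => A x y)).image (Prod.mk x)).card = a := by
      intro x hx
      rw [Finset.card_image_of_injective _ (fun y z h => congrArg Prod.snd h),
        hfilter_card x hx]
    rw [Finset.sum_congr rfl hc, Finset.sum_const, smul_eq_mul, hFcard, mul_comm]
  have hswap_sub : arcs.image Prod.swap ⊆ F.offDiag := by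
    intro p hp
    simp only [Finset.mem_image] at hp
    obtain ⟨q, hq, rfl⟩ := hp
    simp only [harcs, Finset.mem_filter, Finset.mem_offDiag] at hq
    exact Finset.mem_offDiag.mpr ⟨hq.1.2.1, hq.1.1, fun h => hq.1.2.2 h.symm⟩
  have harcs_sub : arcs ⊆ F.offDiag := Finset.filter_subset _ _
  have hdisj : Disjoint arcs (arcs.image Prod.swap) := by
    refine Finset.disjoint_left.mpr ?_
    rintro ⟨x, y⟩ hxy hq
    rw [Finset.mem_image] at hq
    obtain ⟨⟨x', y'⟩, hq, h⟩ := hq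
    simp only [Prod.swap_prod_mk, Prod.mk.injEq] at h
    obtain ⟨rfl, rfl⟩ := h
    simp only [harcs, Finset.mem_filter] at hxy hq
    exact hA _ _ hxy.2 hq.2
  have hswap_card : (arcs.image Prod.swap).card = arcs.card :=
    Finset.card_image_of_injective _ Prod.swap_injective
  have hunion : (arcs ∪ arcs.image Prod.swap).card ≤ F.offDiag.card :=
    Finset.card_le_card (Finset.union_subset harcs_sub hswap_sub)
  rw [Finset.card_union_of_disjoint hdisj, hswap_card, hcard_arcs, Finset.offDiag_card,
    hFcard] at hunion
  have hk1 : 1 ≤ k := by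
    rw [← hk]
    exact (Set.ncard_pos (Set.toFinite U)).mpr hne
  obtain ⟨m, rfl⟩ : ∃ m, k = m + 1 := ⟨k - 1, by omega⟩
  have e1 : (m+1)*(m+1) - (m+1) = (m+1)*m := by
    have : (m+1)*(m+1) = (m+1)*m + (m+1) := by ring
    omega
  have e2 : (m+1)*(2*a) ≤ (m+1)*m := by
    have : a*(m+1) + a*(m+1) = (m+1)*(2*a) := by ring
    omega
  have := Nat.le_of_mul_le_mul_left e2 (by omega)
  omega

lemma aux_img_out {V : Type*} {A : V → V → Prop} {G : Subgroup (Equiv.Perm V)}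
    (hGaut : AutActs A G) {g : Equiv.Perm V} (hg : g ∈ G) (x : V) :
    ⇑g '' {z | A x z} = {z | A (g x) z} := by
  ext w
  constructor
  · rintro ⟨t, ht, rfl⟩
    exact (hGaut g hg x t).mp ht
  · intro hw
    refine ⟨g.symm w, ?_, g.apply_symm_apply w⟩
    have h := hGaut g hg x (g.symm w)
    rw [g.apply_symm_apply] at h
    exact h.mpr hw

lemma aux_img_out_inter {V : Type*} {A : V → V → Prop} {G : Subgroup (Equiv.Perm V)}
    (hGaut : AutActs A G) {g : Equiv.Perm V} (hg : g ∈ G) (x y : V) :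
    ⇑g '' ({z | A x z} ∩ {z | A y z}) = {z | A (g x) z} ∩ {z | A (g y) z} := by
  rw [Set.image_inter g.injective, aux_img_out hGaut hg, aux_img_out hGaut hg]

lemma aux_const_a {V : Type*} {A : V → V → Prop} {G : Subgroup (Equiv.Perm V)}
    (hGaut : AutActs A G) (hat : ArcTrans A G)
    {u v x y : V} (huv : A u v) (hxy : A x y) :
    ({z | A x z} ∩ {z | A y z}).ncard = ({z | A u z} ∩ {z | A v z}).ncard := by
  obtain ⟨g, hg, hgu, hgv⟩ := hat u v x y huv hxy
  rw [← hgu, ← hgv, ← aux_img_out_inter hGaut hg,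
    Set.ncard_image_of_injective _ g.injective]

lemma aux_isArcSeq_two {V : Type*} {A : V → V → Prop} {u v w : V}
    (h1 : A u v) (h2 : A v w) : IsArcSeq A 2 ![u, v, w] := by
  intro i
  fin_cases i
  · exact h1
  · exact h2

lemma aux_ddist_eq_two {V : Type*} {A : V → V → Prop} {u v w : V} (h1 : A u v)
    (h2 : A v w) (h3 : ¬ A u w) (h4 : u ≠ w) : ddist A u w = 2 := by
  have hmem : 2 ∈ {n : ℕ | ∃ p : Fin (n + 1) → V,
      IsArcSeq A n p ∧ p 0 = u ∧ p (Fin.last n) = w} :=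
    ⟨![u, v, w], aux_isArcSeq_two h1 h2, rfl, rfl⟩
  refine le_antisymm (Nat.sInf_le hmem) (le_csInf ⟨2, hmem⟩ ?_)
  rintro n ⟨p, hp, hp0, hpl⟩
  by_contra hlt
  push_neg at hlt
  interval_cases n
  · exact h4 (by rw [← hp0, ← hpl]; rfl)
  · have h := hp 0
    rw [show ((0 : Fin 1).castSucc) = (0 : Fin 2) from rfl,
      show ((0 : Fin 1).succ) = Fin.last 1 from rfl, hp0, hpl] at h
    exact h3 h

lemma aux_isGeodesic_two {V : Type*} {A : V → V → Prop}
    (hA : ∀ u v : V, A u v → ¬ A v u)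
    {u v w : V} (h1 : A u v) (h2 : A v w) (h3 : ¬ A u w) :
    IsGeodesic A 2 ![u, v, w] := by
  have h4 : u ≠ w := by rintro rfl; exact hA _ _ h1 h2
  exact ⟨aux_isArcSeq_two h1 h2, aux_ddist_eq_two h1 h2 h3 h4⟩

lemma aux_final_blow {V : Type*} [Fintype V] {A : V → V → Prop}
    {G : Subgroup (Equiv.Perm V)}
    (hA : ∀ u v : V, A u v → ¬ A v u) (hgt : GeoTrans A G 2)
    {u v z : V} (h1 : A u v) (hvz : A v z) (huz : ¬ A u z)
    (hfix : ∀ g : Equiv.Perm V, g ∈ G → g u = u → g v = v → g z = z)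
    (hbig : 2 ≤ ({x | A v x} \ {x | A u x}).ncard) : False := by
  have hzS : z ∈ {x | A v x} \ {x | A u x} := ⟨hvz, huz⟩
  have h1' : 1 ≤ (({x | A v x} \ {x | A u x}) \ {z}).ncard := by
    have := Set.ncard_diff_singleton_add_one hzS (Set.toFinite _)
    omega
  have hne : (({x | A v x} \ {x | A u x}) \ {z}).Nonempty :=
    Set.nonempty_of_ncard_ne_zero (by omega)
  obtain ⟨s, hs⟩ := hne
  have hvs : A v s := hs.1.1
  have hus : ¬ A u s := hs.1.2
  have hsz : s ≠ z := hs.2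
  obtain ⟨g, hg, hmap⟩ := hgt 2 le_rfl ![u, v, z] ![u, v, s]
    (aux_isGeodesic_two hA h1 hvz huz) (aux_isGeodesic_two hA h1 hvs hus)
  have e0 : g u = u := hmap 0
  have e1 : g v = v := hmap 1
  have e2 : g z = s := hmap 2
  exact hsz (by rw [← e2, hfix g hg e0 e1])

lemma aux_pair_other {α : Type*} {s : Set α} {q : α} (h2 : s.ncard = 2) (hq : q ∈ s) :
    ∃ z, z ≠ q ∧ s = {q, z} := by
  obtain ⟨x, y, hxy, rfl⟩ := Set.ncard_eq_two.mp h2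
  rcases hq with rfl | hq
  · exact ⟨y, fun h => hxy h.symm, rfl⟩
  · rw [Set.mem_singleton_iff] at hq
    subst hq
    exact ⟨x, fun h => hxy h, Set.pair_comm x q⟩

lemma aux_adj_case {V : Type*} [Fintype V] {A : V → V → Prop}
    {G : Subgroup (Equiv.Perm V)}
    (hA : ∀ u v : V, A u v → ¬ A v u) (hGaut : AutActs A G) (hgt : GeoTrans A G 2)
    {u v p q : V} (h1 : A u v)
    (hW : {z | A u z} ∩ {z | A v z} = {p, q}) (hpq : p ≠ q) (hApq : A p q)
    (hT2 : ({z | A v z} ∩ {z | A p z}).ncard = 2)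
    (hbig : 2 ≤ ({z | A v z} \ {z | A u z}).ncard) : False := by
  have hirr : ∀ x, ¬ A x x := fun x h => hA x x h h
  have hpW : p ∈ {z | A u z} ∩ {z | A v z} := by rw [hW]; exact Set.mem_insert _ _
  have hqW : q ∈ {z | A u z} ∩ {z | A v z} := by
    rw [hW]; exact Set.mem_insert_of_mem _ rfl
  have hvp : A v p := hpW.2
  have hvq : A v q := hqW.2
  have hqT : q ∈ {z | A v z} ∩ {z | A p z} := ⟨hvq, hApq⟩
  obtain ⟨z, hzq, hT⟩ := aux_pair_other hT2 hqT
  have hzT : z ∈ {z | A v z} ∩ {z | A p z} := by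
    rw [hT]; exact Set.mem_insert_of_mem _ rfl
  have hvz : A v z := hzT.1
  have hpz : A p z := hzT.2
  have huz : ¬ A u z := by
    intro h
    have hmem : z ∈ ({p, q} : Set V) := by rw [← hW]; exact ⟨h, hvz⟩
    rcases hmem with rfl | hmem
    · exact hirr z hpz
    · rw [Set.mem_singleton_iff] at hmem
      exact hzq hmem
  have hfix : ∀ g : Equiv.Perm V, g ∈ G → g u = u → g v = v → g z = z := by
    intro g hg hgu hgv
    have hWimg : ({g p, g q} : Set V) = {p, q} := by
      rw [← Set.image_pair, ← hW, aux_img_out_inter hGaut hg, hgu, hgv, hW]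
    have hgp : g p = p := by
      have hgpm : g p ∈ ({p, q} : Set V) := by
        rw [← hWimg]; exact Set.mem_insert _ _
      rcases hgpm with h | h
      · exact h
      · exfalso
        rw [Set.mem_singleton_iff] at h
        have hgqm : g q ∈ ({p, q} : Set V) := by
          rw [← hWimg]; exact Set.mem_insert_of_mem _ rfl
        have hgq : g q = p := by
          rcases hgqm with h' | h'
          · exact h'
          · rw [Set.mem_singleton_iff] at h'
            exact absurd (g.injective (h.trans h'.symm)) hpq
        have := (hGaut g hg p q).mp hApq
        rw [h, hgq] at this
        exact hA p q hApq this
    have hgq : g q = q := by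
      have hgqm : g q ∈ ({p, q} : Set V) := by
        rw [← hWimg]; exact Set.mem_insert_of_mem _ rfl
      rcases hgqm with h | h
      · exact absurd (g.injective (h.trans hgp.symm)).symm hpq
      · rw [Set.mem_singleton_iff] at h; exact h
    have hTimg : ({g q, g z} : Set V) = {q, z} := by
      rw [← Set.image_pair, ← hT, aux_img_out_inter hGaut hg, hgv, hgp, hT]
    have hgzm : g z ∈ ({q, z} : Set V) := by
      rw [← hTimg]; exact Set.mem_insert_of_mem _ rfl
    rcases hgzm with h | h
    · exfalso; exact hzq (g.injective (h.trans hgq.symm))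
    · rw [Set.mem_singleton_iff] at h; exact h
  exact aux_final_blow hA hgt h1 hvz huz hfix hbig

lemma aux_no_triangle {V : Type*} [Fintype V] {A : V → V → Prop}
    {G : Subgroup (Equiv.Perm V)} {k : ℕ}
    (hA : ∀ u v : V, A u v → ¬ A v u) (hGaut : AutActs A G) (hat : ArcTrans A G)
    (hval : HasValency A k) (hk5 : k ≤ 5) (hgt : GeoTrans A G 2)
    {u v w : V} (h1 : A u v) (h2 : A v w) (h3 : A u w) : False := by
  have hirr : ∀ x, ¬ A x x := fun x h => hA x x h h
  set a := ({z | A u z} ∩ {z | A v z}).ncard with ha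
  have hconst : ∀ x y : V, A x y → ({z | A x z} ∩ {z | A y z}).ncard = a :=
    fun x y hxy => aux_const_a hGaut hat h1 hxy
  have ha1 : 1 ≤ a := by
    rw [ha]
    exact (Set.ncard_pos (Set.toFinite _)).mpr ⟨w, h3, h2⟩
  have hUk : ({z | A u z}).ncard = k := (hval u).1
  have hdeg : ∀ x ∈ {z | A u z}, ({y | A x y} ∩ {z | A u z}).ncard = a := by
    intro x hx
    rw [Set.inter_comm]
    exact hconst u x hx
  have hbound : 2 * a + 1 ≤ k := aux_degree_bound hA {z | A u z} hUk ⟨v, h1⟩ hdeg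
  have hSbig : ∀ x y : V, A x y → 2 ≤ ({z | A y z} \ {z | A x z}).ncard := by
    intro x y hxy
    have hdd : {z | A y z} \ {z | A x z}
        = {z | A y z} \ ({z | A y z} ∩ {z | A x z}) := by
      ext t
      simp only [Set.mem_diff, Set.mem_setOf_eq, Set.mem_inter_iff]
      tauto
    have hcount : ({z | A y z} \ ({z | A y z} ∩ {z | A x z})).ncard = k - a := by
      rw [Set.ncard_diff Set.inter_subset_left (Set.toFinite _), (hval y).1,
        Set.inter_comm, hconst x y hxy]
    rw [hdd, hcount]
    omega
  have ha12 : a = 1 ∨ a = 2 := by omega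
  rcases ha12 with ha' | ha'
  · -- a = 1
    obtain ⟨v₂, hW⟩ := Set.ncard_eq_one.mp (by rw [← ha, ha'])
    have hv2 : v₂ ∈ {z | A u z} ∩ {z | A v z} := by rw [hW]; exact rfl
    have hvv2 : A v v₂ := hv2.2
    obtain ⟨z, hz⟩ := Set.ncard_eq_one.mp (by rw [hconst v v₂ hvv2, ha'])
    have hzm : z ∈ {x | A v x} ∩ {x | A v₂ x} := by rw [hz]; exact rfl
    have hvz : A v z := hzm.1
    have hv2z : A v₂ z := hzm.2
    have huz : ¬ A u z := by
      intro h
      have hmem : z ∈ ({v₂} : Set V) := by rw [← hW]; exact ⟨h, hvz⟩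
      rw [Set.mem_singleton_iff] at hmem
      exact hirr v₂ (hmem ▸ hv2z)
    have hfix : ∀ g : Equiv.Perm V, g ∈ G → g u = u → g v = v → g z = z := by
      intro g hg hgu hgv
      have hgv2 : g v₂ = v₂ := by
        have himg : ⇑g '' ({z | A u z} ∩ {z | A v z}) = {z | A u z} ∩ {z | A v z} := by
          rw [aux_img_out_inter hGaut hg, hgu, hgv]
        rw [hW, Set.image_singleton, Set.singleton_eq_singleton_iff] at himg
        exact himg
      have himg : ⇑g '' ({x | A v x} ∩ {x | A v₂ x}) = {x | A v x} ∩ {x | A v₂ x} := by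
        rw [aux_img_out_inter hGaut hg, hgv, hgv2]
      rw [hz, Set.image_singleton, Set.singleton_eq_singleton_iff] at himg
      exact himg
    exact aux_final_blow hA hgt h1 hvz huz hfix (hSbig u v h1)
  · -- a = 2, so k = 5
    have hk5' : k = 5 := by omega
    obtain ⟨p, q, hpq, hW⟩ := Set.ncard_eq_two.mp (by rw [← ha, ha'])
    have hpW : p ∈ {z | A u z} ∩ {z | A v z} := by rw [hW]; exact Set.mem_insert _ _
    have hqW : q ∈ {z | A u z} ∩ {z | A v z} := by
      rw [hW]; exact Set.mem_insert_of_mem _ rfl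
    have hup : A u p := hpW.1
    have hvp : A v p := hpW.2
    have huq : A u q := hqW.1
    have hvq : A v q := hqW.2
    by_cases hApq : A p q
    · exact aux_adj_case hA hGaut hgt h1 hW hpq hApq
        (by rw [hconst v p hvp, ha']) (hSbig u v h1)
    · by_cases hAqp : A q p
      · exact aux_adj_case hA hGaut hgt h1
          (by rw [hW, Set.pair_comm]) hpq.symm hAqp
          (by rw [hconst v q hvq, ha']) (hSbig u v h1)
      · -- p, q not adjacent: contradiction by pure counting
        have hvp' : v ≠ p := fun h => hirr p (h ▸ hvp)
        have hvq' : v ≠ q := fun h => hirr q (h ▸ hvq)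
        have htrip : ({v, p, q} : Set V).ncard = 3 := by
          rw [Set.ncard_insert_of_notMem (by simp [hvp', hvq']) (Set.toFinite _),
            Set.ncard_pair hpq]
        have hsub : ({v, p, q} : Set V) ⊆ {z | A u z} := by
          intro t ht
          rcases ht with rfl | ht
          · exact h1
          · rcases ht with rfl | ht
            · exact hup
            · rw [Set.mem_singleton_iff] at ht; exact ht ▸ huq
        have hD : ({z | A u z} \ {v, p, q}).ncard = 2 := by
          rw [Set.ncard_diff hsub (Set.toFinite _), hUk, htrip, hk5']
        -- P = D and Q = D
        have hPsub : {z | A p z} ∩ {z | A u z} ⊆ {z | A u z} \ {v, p, q} := by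
          rintro t ⟨hpt, htU⟩
          refine ⟨htU, ?_⟩
          intro htm
          rcases htm with h | htm
          · exact hA v p hvp (h ▸ hpt)
          · rcases htm with h | htm
            · exact hirr p (h ▸ hpt)
            · rw [Set.mem_singleton_iff] at htm
              exact hApq (htm ▸ hpt)
        have hQsub : {z | A q z} ∩ {z | A u z} ⊆ {z | A u z} \ {v, p, q} := by
          rintro t ⟨hqt, htU⟩
          refine ⟨htU, ?_⟩
          intro htm
          rcases htm with h | htm
          · exact hA v q hvq (h ▸ hqt)
          · rcases htm with h | htm
            · exact hAqp (h ▸ hqt)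
            · rw [Set.mem_singleton_iff] at htm
              exact hirr q (htm ▸ hqt)
        have hPcard : ({z | A p z} ∩ {z | A u z}).ncard = 2 := by
          rw [hdeg p hup, ha']
        have hQcard : ({z | A q z} ∩ {z | A u z}).ncard = 2 := by
          rw [hdeg q huq, ha']
        have hPeq : {z | A p z} ∩ {z | A u z} = {z | A u z} \ {v, p, q} :=
          Set.eq_of_subset_of_ncard_le hPsub (by rw [hPcard, hD]) (Set.toFinite _)
        have hQeq : {z | A q z} ∩ {z | A u z} = {z | A u z} \ {v, p, q} :=
          Set.eq_of_subset_of_ncard_le hQsub (by rw [hQcard, hD]) (Set.toFinite _)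
        obtain ⟨r, s, hrs, hDeq⟩ := Set.ncard_eq_two.mp hD
        have hrD : r ∈ {z | A u z} \ ({v, p, q} : Set V) := by
          rw [hDeq]; exact Set.mem_insert _ _
        have hsD : s ∈ {z | A u z} \ ({v, p, q} : Set V) := by
          rw [hDeq]; exact Set.mem_insert_of_mem _ rfl
        have hpr : A p r := by rw [← hPeq] at hrD; exact hrD.1
        have hps : A p s := by rw [← hPeq] at hsD; exact hsD.1
        have hqr : A q r := by rw [← hQeq] at hrD; exact hrD.1
        have hqs : A q s := by rw [← hQeq] at hsD; exact hsD.1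
        have hur : A u r := hrD.1
        have hus : A u s := hsD.1
        have hvs' : v ≠ s := by
          intro h
          exact hsD.2 (by rw [← h]; exact Set.mem_insert _ _)
        have hvr' : v ≠ r := by
          intro h
          exact hrD.2 (by rw [← h]; exact Set.mem_insert _ _)
        -- R = out r ∩ U ⊆ {v, s}
        have hmemU : ∀ t ∈ {z | A u z}, t = v ∨ t = p ∨ t = q ∨ t = r ∨ t = s := by
          intro t htU
          by_cases h : t ∈ ({v, p, q} : Set V)
          · rcases h with h | h
            · exact Or.inl h
            · rcases h with h | h
              · exact Or.inr (Or.inl h)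
              · rw [Set.mem_singleton_iff] at h
                exact Or.inr (Or.inr (Or.inl h))
          · have : t ∈ ({r, s} : Set V) := by rw [← hDeq]; exact ⟨htU, h⟩
            rcases this with h' | h'
            · exact Or.inr (Or.inr (Or.inr (Or.inl h')))
            · rw [Set.mem_singleton_iff] at h'
              exact Or.inr (Or.inr (Or.inr (Or.inr h')))
        have hRsub : {z | A r z} ∩ {z | A u z} ⊆ ({v, s} : Set V) := by
          rintro t ⟨hrt, htU⟩
          rcases hmemU t htU with h | h | h | h | h
          · rw [h]; exact Set.mem_insert _ _
          · exact absurd (h ▸ hrt) (hA p r hpr)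
          · exact absurd (h ▸ hrt) (hA q r hqr)
          · exact absurd (h ▸ hrt) (hirr r)
          · rw [h]; exact Set.mem_insert_of_mem _ rfl
        have hSsub : {z | A s z} ∩ {z | A u z} ⊆ ({v, r} : Set V) := by
          rintro t ⟨hst, htU⟩
          rcases hmemU t htU with h | h | h | h | h
          · rw [h]; exact Set.mem_insert _ _
          · exact absurd (h ▸ hst) (hA p s hps)
          · exact absurd (h ▸ hst) (hA q s hqs)
          · rw [h]; exact Set.mem_insert_of_mem _ rfl
          · exact absurd (h ▸ hst) (hirr s)
        have hRcard : ({z | A r z} ∩ {z | A u z}).ncard = 2 := by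
          rw [hdeg r hur, ha']
        have hScard : ({z | A s z} ∩ {z | A u z}).ncard = 2 := by
          rw [hdeg s hus, ha']
        have hReq : {z | A r z} ∩ {z | A u z} = ({v, s} : Set V) :=
          Set.eq_of_subset_of_ncard_le hRsub
            (by rw [hRcard, Set.ncard_pair hvs']) (Set.toFinite _)
        have hSeq : {z | A s z} ∩ {z | A u z} = ({v, r} : Set V) :=
          Set.eq_of_subset_of_ncard_le hSsub
            (by rw [hScard, Set.ncard_pair hvr']) (Set.toFinite _)
        have hArs : A r s := by
          have : s ∈ {z | A r z} ∩ {z | A u z} := by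
            rw [hReq]; exact Set.mem_insert_of_mem _ rfl
          exact this.1
        have hAsr : A s r := by
          have : r ∈ {z | A s z} ∩ {z | A u z} := by
            rw [hSeq]; exact Set.mem_insert_of_mem _ rfl
          exact this.1
        exact hA r s hArs hAsr
/-- **Theorem 1.5(i).** Let `Γ` be a finite `G`-arc-transitive digraph of valency `k` with
`2 ≤ k ≤ 5`. Then `Γ` is `(G,2)`-geodesic-transitive if and only if it is
`(G,2)`-arc-transitive. -/
theorem small_valency_iff {V : Type*} [Fintype V] (A : V → V → Prop)
    (G : Subgroup (Equiv.Perm V)) (k : ℕ)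
    (hA : ∀ u v : V, A u v → ¬ A v u)
    (hGaut : AutActs A G)
    (hat : ArcTrans A G)
    (hval : HasValency A k) (hk2 : 2 ≤ k) (hk5 : k ≤ 5) :
    GeoTrans A G 2 ↔ TwoArcTrans A G := by
  constructor
  · intro hgt u v w u' v' w' h1 h2 h1' h2'
    have h3 : ¬ A u w := fun h => aux_no_triangle hA hGaut hat hval hk5 hgt h1 h2 h
    have h3' : ¬ A u' w' := fun h => aux_no_triangle hA hGaut hat hval hk5 hgt h1' h2' h
    obtain ⟨g, hg, hmap⟩ := hgt 2 le_rfl ![u, v, w] ![u', v', w']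
      (aux_isGeodesic_two hA h1 h2 h3) (aux_isGeodesic_two hA h1' h2' h3')
    exact ⟨g, hg, hmap 0, hmap 1, hmap 2⟩
  · intro h2at i hi p q hp hq
    interval_cases i
    · obtain ⟨y, hy⟩ : ({z | A (p 0) z}).Nonempty :=
        Set.nonempty_of_ncard_ne_zero (by rw [(hval _).1]; omega)
      obtain ⟨y', hy'⟩ : ({z | A (q 0) z}).Nonempty :=
        Set.nonempty_of_ncard_ne_zero (by rw [(hval _).1]; omega)
      obtain ⟨g, hg, hgu, -⟩ := hat (p 0) y (q 0) y' hy hy'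
      refine ⟨g, hg, fun j => ?_⟩
      fin_cases j
      exact hgu
    · have hp1 : A (p 0) (p 1) := hp.1 0
      have hq1 : A (q 0) (q 1) := hq.1 0
      obtain ⟨g, hg, hgu, hgv⟩ := hat _ _ _ _ hp1 hq1
      refine ⟨g, hg, fun j => ?_⟩
      fin_cases j
      · exact hgu
      · exact hgv
    · have hp1 : A (p 0) (p 1) := hp.1 0
      have hp2 : A (p 1) (p 2) := hp.1 1
      have hq1 : A (q 0) (q 1) := hq.1 0
      have hq2 : A (q 1) (q 2) := hq.1 1
      obtain ⟨g, hg, hgu, hgv, hgw⟩ := h2at _ _ _ _ _ _ hp1 hp2 hq1 hq2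
      refine ⟨g, hg, fun j => ?_⟩
      fin_cases j
      · exact hgu
      · exact hgv
      · exact hgw

end SGeodesicDigraph
end

section
/- Let Γ be a finite connected G-arc-transitive digraph of valency k ≥ 2, and let (u,v) be an arc of Γ. Then Γ^+(u) ≠ {v} ∪ (Γ^+(u) ∩ Γ^+(v)). -/
namespace SGeodesicDigraph

variable {V : Type*}

/-- **Lemma 2.1(1).** Let `Γ` be a finite connected `G`-arc-transitive digraph of valency
`k ≥ 2` and let `(u,v)` be an arc. Then `Γ⁺(u) ≠ {v} ∪ (Γ⁺(u) ∩ Γ⁺(v))`. -/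
theorem outnbr_ne_of_arc {V : Type*} [Fintype V] (A : V → V → Prop)
    (G : Subgroup (Equiv.Perm V)) (k : ℕ)
    (hA : ∀ u v : V, A u v → ¬ A v u)
    (hconn : DConnected A)
    (hGaut : AutActs A G)
    (hat : ArcTrans A G)
    (hval : HasValency A k) (hk : 2 ≤ k)
    (u v : V) (huv : A u v) :
    {w : V | A u w} ≠ {v} ∪ ({w : V | A u w} ∩ {w : V | A v w}) := by
  intro heq
  -- find w ≠ v with A u w
  obtain ⟨w, huw, hwv⟩ : ∃ w, A u w ∧ w ≠ v := by
    by_contra h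
    push_neg at h
    have hsub : {w : V | A u w} ⊆ {v} := fun x hx => h x hx
    have h1 : ({w : V | A u w}).ncard ≤ ({v} : Set V).ncard :=
      Set.ncard_le_ncard hsub (Set.toFinite _)
    rw [Set.ncard_singleton, (hval u).1] at h1
    omega
  -- w ∈ Γ⁺(u) = {v} ∪ (Γ⁺(u) ∩ Γ⁺(v)), w ≠ v so A v w
  have hvw : A v w := by
    have : w ∈ {v} ∪ ({w : V | A u w} ∩ {w : V | A v w}) := heq ▸ huw
    rcases this with h | h
    · exact absurd h hwv
    · exact h.2
  -- transfer the equation along g : (u,v) ↦ (u,w)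
  obtain ⟨g, hg, hgu, hgv⟩ := hat u v u w huv huw
  have hwv' : A w v := by
    have hy : A u (g⁻¹ v) := by
      have := (hGaut g hg u (g⁻¹ v)).mpr
      rw [hgu, @id (g (g⁻¹ v) = v) (Equiv.apply_symm_apply g v)] at this
      exact this huv
    have : (g⁻¹ v) ∈ {v} ∪ ({w : V | A u w} ∩ {w : V | A v w}) := heq ▸ hy
    rcases this with h | h
    · -- g⁻¹ v = v, so v = g v = w, contradiction
      exfalso
      apply hwv
      have : v = g v := by
        conv_lhs => rw [← @id (g (g⁻¹ v) = v) (Equiv.apply_symm_apply g v), h]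
      rw [hgv] at this
      exact this.symm ▸ rfl
    · have hvy : A v (g⁻¹ v) := h.2
      have := (hGaut g hg v (g⁻¹ v)).mp hvy
      rwa [hgv, @id (g (g⁻¹ v) = v) (Equiv.apply_symm_apply g v)] at this
  exact hA v w hvw hwv'

end SGeodesicDigraph
end

section
/- Let Γ be a finite connected (G,s)-geodesic-transitive digraph for some s ≥ 1, and let N be a nontrivial intransitive normal subgroup of G. Then no orbit of N on V(Γ) contains an arc of Γ. -/
namespace SGeodesicDigraph

variable {V : Type*}

/-- **Lemma 3.1.** Let `Γ` be a finite connected `(G,s)`-geodesic-transitive digraph for some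
`s ≥ 1`, and let `N` be a nontrivial intransitive normal subgroup of `G`. Then no `N`-orbit
contains an arc of `Γ`. -/
theorem no_arc_in_orbit {V : Type*} [Fintype V] (A : V → V → Prop)
    (G N : Subgroup (Equiv.Perm V)) (s : ℕ)
    (hA : ∀ u v : V, A u v → ¬ A v u)
    (hconn : DConnected A)
    (hGaut : AutActs A G)
    (hgt : GeoTrans A G s) (hs : 1 ≤ s)
    (hNG : NormalIn N G) (hN : N ≠ ⊥)
    (hNintr : ¬ SubTrans N) :
    ∀ u v : V, SameOrb N u v → ¬ A u v := by
  -- SameOrb is an equivalence relation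
  have horefl : ∀ x : V, SameOrb N x x := fun x => ⟨1, N.one_mem, rfl⟩
  have hosymm : ∀ x y : V, SameOrb N x y → SameOrb N y x := by
    rintro x y ⟨n, hn, rfl⟩
    exact ⟨n⁻¹, N.inv_mem hn, Equiv.symm_apply_apply n x⟩
  have hotrans : ∀ x y z : V, SameOrb N x y → SameOrb N y z → SameOrb N x z := by
    rintro x y z ⟨n, hn, rfl⟩ ⟨m, hm, rfl⟩
    exact ⟨m * n, N.mul_mem hm hn, rfl⟩
  rintro u v huv hAuv
  -- every arc is a 1-geodesic
  have hgeo : ∀ x y : V, A x y → IsGeodesic A 1 ![x, y] := by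
    intro x y hxy
    have hne : x ≠ y := by rintro rfl; exact hA x x hxy hxy
    constructor
    · intro i
      fin_cases i
      simpa using hxy
    · simp only [Matrix.cons_val_zero]
      have hlast : (![x, y] : Fin 2 → V) (Fin.last 1) = y := rfl
      rw [hlast]
      have h1 : 1 ∈ {n : ℕ | ∃ p : Fin (n + 1) → V,
          IsArcSeq A n p ∧ p 0 = x ∧ p (Fin.last n) = y} := by
        refine ⟨![x, y], ?_, rfl, rfl⟩
        intro i; fin_cases i; simpa using hxy
      have h0 : 0 ∉ {n : ℕ | ∃ p : Fin (n + 1) → V,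
          IsArcSeq A n p ∧ p 0 = x ∧ p (Fin.last n) = y} := by
        rintro ⟨p, -, hp0, hpl⟩
        exact hne (hp0 ▸ hpl ▸ rfl)
      refine le_antisymm (Nat.sInf_le h1) ?_
      rcases Nat.eq_zero_or_pos (sInf {n : ℕ | ∃ p : Fin (n + 1) → V,
          IsArcSeq A n p ∧ p 0 = x ∧ p (Fin.last n) = y}) with h | h
      · exact absurd (Nat.sInf_mem ⟨1, h1⟩) (fun hm => h0 (by rwa [h] at hm))
      · exact h
  -- every arc lies inside an N-orbit
  have harc : ∀ x y : V, A x y → SameOrb N x y := by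
    intro x y hxy
    obtain ⟨g, hg, hgj⟩ := hgt 1 hs ![u, v] ![x, y] (hgeo u v hAuv) (hgeo x y hxy)
    obtain ⟨n, hn, hnu⟩ := huv
    have hgu : g u = x := hgj 0
    have hgv : g v = y := hgj 1
    refine ⟨g * n * g⁻¹, hNG.2 g hg n hn, ?_⟩
    simp only [Equiv.Perm.mul_apply]
    rw [← hgu, show g⁻¹ (g u) = u from Equiv.symm_apply_apply g u, hnu, hgv]
  -- connectivity forces N transitive
  apply hNintr
  intro a b
  induction hconn a b with
  | refl => exact horefl a
  | tail _ hstep ih =>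
      rcases hstep with h | h
      · exact hotrans _ _ _ ih (harc _ _ h)
      · exact hotrans _ _ _ ih (hosymm _ _ (harc _ _ h))

end SGeodesicDigraph
end

section
/- Let Γ be a finite G-arc-transitive digraph of valency r ≥ 2. Then for every arc (u,v) of Γ, |Γ^+(u) ∩ Γ^+(v)| ≠ r − 1. -/
namespace SGeodesicDigraph

variable {V : Type*}

/-- **Lemma 4.1.** Let `Γ` be a finite `G`-arc-transitive digraph of valency `r ≥ 2`. Then
`|Γ⁺(u) ∩ Γ⁺(v)| ≠ r - 1` for every arc `(u,v)`. -/
theorem common_outnbr_ne_sub_one {V : Type*} [Fintype V] (A : V → V → Prop)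
    (G : Subgroup (Equiv.Perm V)) (r : ℕ)
    (hA : ∀ u v : V, A u v → ¬ A v u)
    (hGaut : AutActs A G)
    (hat : ArcTrans A G)
    (hval : HasValency A r) (hr : 2 ≤ r) :
    ∀ u v : V, A u v → ({w : V | A u w} ∩ {w : V | A v w}).ncard ≠ r - 1 := by
  intro u v huv hcard
  -- every arc has the same number of common out-neighbours
  have key : ∀ x y : V, A x y → ({w : V | A x w} ∩ {w : V | A y w}).ncard = r - 1 := by
    intro x y hxy
    obtain ⟨g, hg, hgu, hgv⟩ := hat u v x y huv hxy
    have himg : (⇑g '' ({w : V | A u w} ∩ {w : V | A v w}))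
        = {w : V | A x w} ∩ {w : V | A y w} := by
      ext w
      simp only [Set.mem_image, Set.mem_inter_iff, Set.mem_setOf_eq]
      constructor
      · rintro ⟨z, ⟨h1, h2⟩, rfl⟩
        rw [← hgu, ← hgv]
        exact ⟨((hGaut g hg u z).mp h1), ((hGaut g hg v z).mp h2)⟩
      · rintro ⟨h1, h2⟩
        refine ⟨g.symm w, ⟨?_, ?_⟩, g.apply_symm_apply w⟩
        · rw [hGaut g hg u (g.symm w), g.apply_symm_apply, hgu]; exact h1
        · rw [hGaut g hg v (g.symm w), g.apply_symm_apply, hgv]; exact h2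
    rw [← himg, Set.ncard_image_of_injective _ g.injective, hcard]
  -- for any arc (x,y), every out-neighbour of x other than y is an out-neighbour of y
  have sub : ∀ x y : V, A x y → {w : V | A x w} \ {y} ⊆ {w : V | A y w} := by
    intro x y hxy
    have h1 : ({w : V | A x w} ∩ {w : V | A y w}) ⊆ {w : V | A x w} \ {y} := by
      rintro w ⟨hw1, hw2⟩
      refine ⟨hw1, ?_⟩
      intro hwy
      rw [Set.mem_singleton_iff] at hwy
      subst hwy
      exact hA w w hw2 hw2
    have hdfin : ({w : V | A x w} \ {y}).Finite := Set.toFinite _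
    have hcd : ({w : V | A x w} \ {y}).ncard = r - 1 := by
      rw [Set.ncard_diff_singleton_of_mem (show y ∈ {w : V | A x w} from hxy), (hval x).1]
    have heq := Set.eq_of_subset_of_ncard_le h1
      (by rw [key x y hxy, hcd]) hdfin
    rw [← heq]
    exact Set.inter_subset_right
  -- Γ⁺(u) contains some w ≠ v
  have hne : ({w : V | A u w} \ {v}).Nonempty := by
    rw [← Set.ncard_pos (Set.toFinite _),
      Set.ncard_diff_singleton_of_mem (show v ∈ {w : V | A u w} from huv), (hval u).1]
    omega
  obtain ⟨w, hw, hwv⟩ := hne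
  have hwv' : w ≠ v := hwv
  have h1 : A v w := sub u v huv ⟨hw, hwv⟩
  have h2 : A w v := sub u w hw ⟨huv, hwv'.symm⟩
  exact hA v w h1 h2

end SGeodesicDigraph
end

section
/- Let Γ be a finite digraph of valency 2. If Γ is (G,2)-geodesic-transitive, then Γ is (G,2)-arc-transitive. -/
namespace SGeodesicDigraph

variable {V : Type*}

/-- **Lemma 4.2.** Let `Γ` be a finite digraph of valency `2`. If `Γ` is
`(G,2)`-geodesic-transitive, then `Γ` is `(G,2)`-arc-transitive. -/
theorem valency_two_geo_to_arc {V : Type*} [Fintype V] (A : V → V → Prop)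
    (G : Subgroup (Equiv.Perm V))
    (hA : ∀ u v : V, A u v → ¬ A v u)
    (hGaut : AutActs A G)
    (hval : HasValency A 2)
    (hgt : GeoTrans A G 2) :
    TwoArcTrans A G := by
  classical
  have hne : ∀ u v : V, A u v → u ≠ v := by
    intro u v h heq
    subst heq
    exact hA u u h h
  -- membership lemmas for the distance set
  have hmem1 : ∀ u v : V, A u v → (1 : ℕ) ∈
      {n : ℕ | ∃ p : Fin (n + 1) → V, IsArcSeq A n p ∧ p 0 = u ∧ p (Fin.last n) = v} := by
    intro u v h
    refine ⟨![u, v], ?_, rfl, rfl⟩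
    intro i
    fin_cases i
    simpa using h
  have hmem2 : ∀ u v w : V, A u v → A v w → (2 : ℕ) ∈
      {n : ℕ | ∃ p : Fin (n + 1) → V, IsArcSeq A n p ∧ p 0 = u ∧ p (Fin.last n) = w} := by
    intro u v w h1 h2
    refine ⟨![u, v, w], ?_, rfl, rfl⟩
    intro i
    fin_cases i
    · simpa using h1
    · simpa using h2
  have hd1 : ∀ u v : V, A u v → ddist A u v = 1 := by
    intro u v h
    have hle : ddist A u v ≤ 1 := Nat.sInf_le (hmem1 u v h)
    have hne0 : ddist A u v ≠ 0 := by
      intro h0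
      have hmem := Nat.sInf_mem (⟨1, hmem1 u v h⟩ : Set.Nonempty _)
      rw [ddist] at h0
      rw [h0] at hmem
      obtain ⟨p, _, hp0, hpl⟩ := hmem
      exact hne u v h (hp0 ▸ hpl ▸ rfl)
    omega
  have geo1 : ∀ u v : V, A u v → IsGeodesic A 1 ![u, v] := by
    intro u v h
    constructor
    · intro i; fin_cases i; simpa using h
    · simpa using hd1 u v h
  -- arc-transitivity
  have arcT : ∀ u v x y : V, A u v → A x y → ∃ g ∈ G, g u = x ∧ g v = y := by
    intro u v x y h1 h2
    obtain ⟨g, hg, hj⟩ := hgt 1 (by norm_num) ![u, v] ![x, y] (geo1 u v h1) (geo1 x y h2)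
    exact ⟨g, hg, by simpa using hj 0, by simpa using hj 1⟩
  -- no 2-arc has a chord
  have noChord : ∀ u v w : V, A u v → A v w → ¬ A u w := by
    intro u v w h1 h2 h3
    have hvw : v ≠ w := hne v w h2
    have hS : {x : V | A u x} = {v, w} := by
      refine (Set.eq_of_subset_of_ncard_le ?_ ?_ (Set.toFinite _)).symm
      · intro x hx
        rcases hx with hx | hx
        · exact hx ▸ h1
        · simp only [Set.mem_singleton_iff] at hx; exact hx ▸ h3
      · rw [(hval u).1, Set.ncard_pair hvw]
    obtain ⟨g, hg, hgu, hgv⟩ := arcT u v u w h1 h3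
    have hww : A w (g w) := by
      have := (hGaut g hg v w).mp h2
      rwa [hgv] at this
    have huw : A u (g w) := by
      have := (hGaut g hg u w).mp h3
      rwa [hgu] at this
    have : g w ∈ ({v, w} : Set V) := hS ▸ huw
    rcases this with h | h
    · rw [h] at hww; exact hA v w h2 hww
    · simp only [Set.mem_singleton_iff] at h
      rw [h] at hww; exact hA w w hww hww
  -- every 2-arc is a 2-geodesic
  have geo2 : ∀ u v w : V, A u v → A v w → IsGeodesic A 2 ![u, v, w] := by
    intro u v w h1 h2
    constructor
    · intro i; fin_cases i
      · simpa using h1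
      · simpa using h2
    · have hle : ddist A u w ≤ 2 := Nat.sInf_le (hmem2 u v w h1 h2)
      have hmem := Nat.sInf_mem (⟨2, hmem2 u v w h1 h2⟩ : Set.Nonempty _)
      have hne0 : ddist A u w ≠ 0 := by
        intro h0
        rw [ddist] at h0
        rw [h0] at hmem
        obtain ⟨p, _, hp0, hpl⟩ := hmem
        have huw : u = w := hp0 ▸ hpl ▸ rfl
        subst huw
        exact hA u v h1 h2
      have hne1 : ddist A u w ≠ 1 := by
        intro h0
        rw [ddist] at h0
        rw [h0] at hmem
        obtain ⟨p, hp, hp0, hpl⟩ := hmem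
        have := hp 0
        rw [show (Fin.castSucc 0 : Fin 2) = 0 from rfl, show (Fin.succ 0 : Fin 2) = Fin.last 1 from rfl, hp0, hpl] at this
        exact noChord u v w h1 h2 this
      have : ddist A u w = 2 := by omega
      simpa using this
  intro u v w u' v' w' h1 h2 h3 h4
  obtain ⟨g, hg, hj⟩ := hgt 2 le_rfl ![u, v, w] ![u', v', w']
    (geo2 u v w h1 h2) (geo2 u' v' w' h3 h4)
  exact ⟨g, hg, by simpa using hj 0, by simpa using hj 1, by simpa using hj 2⟩

end SGeodesicDigraph
end

section
/- Let Γ be a finite (G,2)-geodesic-transitive digraph of valency 3. Then Γ is (G,2)-arc-transitive. -/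
namespace SGeodesicDigraph

variable {V : Type*}

private lemma arcSeq_pair {A : V → V → Prop} {u v : V} (h : A u v) :
    IsArcSeq A 1 ![u, v] := by
  intro i
  fin_cases i
  simpa using h

private lemma arcSeq_triple {A : V → V → Prop} {u v w : V} (h1 : A u v) (h2 : A v w) :
    IsArcSeq A 2 ![u, v, w] := by
  intro i
  fin_cases i
  · simpa using h1
  · simpa using h2

private lemma ddist_eq_one {A : V → V → Prop} (hA : ∀ u v : V, A u v → ¬ A v u)
    {u v : V} (h : A u v) : ddist A u v = 1 := by
  have hne : u ≠ v := by rintro rfl; exact hA u u h h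
  set S : Set ℕ :=
    {n : ℕ | ∃ p : Fin (n + 1) → V, IsArcSeq A n p ∧ p 0 = u ∧ p (Fin.last n) = v} with hS
  have h1 : 1 ∈ S := ⟨![u, v], arcSeq_pair h, rfl, rfl⟩
  have h0 : 0 ∉ S := by
    rintro ⟨p, -, hp0, hpl⟩
    exact hne (hp0 ▸ hpl ▸ rfl)
  have hle := Nat.sInf_le h1
  have hmem := Nat.sInf_mem (⟨1, h1⟩ : S.Nonempty)
  have : sInf S = 0 ∨ sInf S = 1 := by omega
  rcases this with h' | h'
  · exact absurd (h' ▸ hmem) h0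
  · exact h'

private lemma ddist_eq_two {A : V → V → Prop} (hA : ∀ u v : V, A u v → ¬ A v u)
    {u v c : V} (huv : A u v) (hvc : A v c) (huc : ¬ A u c) (hne : u ≠ c) :
    ddist A u c = 2 := by
  set S : Set ℕ :=
    {n : ℕ | ∃ p : Fin (n + 1) → V, IsArcSeq A n p ∧ p 0 = u ∧ p (Fin.last n) = c} with hS
  have h2 : 2 ∈ S := ⟨![u, v, c], arcSeq_triple huv hvc, rfl, rfl⟩
  have h0 : 0 ∉ S := by
    rintro ⟨p, -, hp0, hpl⟩
    exact hne (hp0 ▸ hpl ▸ rfl)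
  have h1 : 1 ∉ S := by
    rintro ⟨p, hp, hp0, hpl⟩
    have := hp 0
    rw [show (0 : Fin 1).castSucc = 0 from rfl, show (0 : Fin 1).succ = Fin.last 1 from rfl,
      hp0, hpl] at this
    exact huc this
  have hle := Nat.sInf_le h2
  have hmem := Nat.sInf_mem (⟨2, h2⟩ : S.Nonempty)
  have : sInf S = 0 ∨ sInf S = 1 ∨ sInf S = 2 := by omega
  rcases this with h' | h' | h'
  · exact absurd (h' ▸ hmem) h0
  · exact absurd (h' ▸ hmem) h1
  · exact h'

private lemma common_card_eq {A : V → V → Prop} {G : Subgroup (Equiv.Perm V)}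
    (hGaut : AutActs A G) {g : Equiv.Perm V} (hg : g ∈ G) (u v : V) :
    {x | A u x ∧ A v x}.ncard = {x | A (g u) x ∧ A (g v) x}.ncard := by
  have himg : ⇑g '' {x | A u x ∧ A v x} = {x | A (g u) x ∧ A (g v) x} := by
    ext y
    constructor
    · rintro ⟨x, ⟨hx1, hx2⟩, rfl⟩
      exact ⟨(hGaut g hg u x).mp hx1, (hGaut g hg v x).mp hx2⟩
    · rintro ⟨hy1, hy2⟩
      refine ⟨g⁻¹ y, ⟨?_, ?_⟩, by simp⟩
      · refine (hGaut g hg u (g⁻¹ y)).mpr ?_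
        simpa using hy1
      · refine (hGaut g hg v (g⁻¹ y)).mpr ?_
        simpa using hy2
  rw [← himg, Set.ncard_image_of_injective _ g.injective]

private lemma no_shortcut [Fintype V] {A : V → V → Prop} {G : Subgroup (Equiv.Perm V)}
    (hA : ∀ u v : V, A u v → ¬ A v u) (hGaut : AutActs A G) (hval : HasValency A 3)
    (hgt : GeoTrans A G 2) : ∀ x y z : V, A x y → A y z → ¬ A x z := by
  -- arc-transitivity from 1-geodesic transitivity
  have harc : ∀ a b c d : V, A a b → A c d → ∃ g ∈ G, g a = c ∧ g b = d := by
    intro a b c d hab hcd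
    obtain ⟨g, hg, hj⟩ := hgt 1 (by norm_num) ![a, b] ![c, d]
      ⟨arcSeq_pair hab, by simpa using ddist_eq_one hA hab⟩
      ⟨arcSeq_pair hcd, by simpa using ddist_eq_one hA hcd⟩
    exact ⟨g, hg, by simpa using hj 0, by simpa using hj 1⟩
  have tconst : ∀ a b c d : V, A a b → A c d →
      {x | A a x ∧ A b x}.ncard = {x | A c x ∧ A d x}.ncard := by
    intro a b c d hab hcd
    obtain ⟨g, hg, h1, h2⟩ := harc a b c d hab hcd
    rw [common_card_eq hGaut hg a b, h1, h2]
  intro x y z hxy hyz hxz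
  have hirr : ∀ a : V, ¬ A a a := fun a h => hA a a h h
  have hyznez : y ≠ z := by rintro rfl; exact hirr y hyz
  -- the number of common out-neighbours of an arc is 1
  have ht1 : {w | A x w ∧ A y w}.ncard = 1 := by
    have hz : z ∈ {w | A x w ∧ A y w} := ⟨hxz, hyz⟩
    have hpos : 0 < {w | A x w ∧ A y w}.ncard :=
      (Set.ncard_pos (Set.toFinite _)).mpr ⟨z, hz⟩
    rcases Nat.lt_or_ge {w | A x w ∧ A y w}.ncard 2 with h2 | h2
    · omega
    · exfalso
      have h2' : 2 ≤ {w | A x w ∧ A z w}.ncard := by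
        have := tconst x z x y hxz hxy; omega
      have hsub : {w | A x w ∧ A z w} ⊆ {w | A x w} \ {y, z} := by
        rintro w ⟨h1, hzw⟩
        refine ⟨h1, ?_⟩
        simp only [Set.mem_insert_iff, Set.mem_singleton_iff]
        push_neg
        constructor
        · rintro rfl; exact hA w z hyz hzw
        · rintro rfl; exact hirr w hzw
      have hyx : y ∈ {w | A x w} := hxy
      have hzx : z ∈ {w | A x w} := hxz
      have hsub2 : ({y, z} : Set V) ⊆ {w | A x w} := by
        rintro w hw
        rcases hw with rfl | hw
        · exact hyx
        · rcases hw with rfl; exact hzx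
      have hdiff : ({w | A x w} \ {y, z}).ncard = 1 := by
        rw [Set.ncard_diff hsub2, (hval x).1, Set.ncard_pair hyznez]
      have := Set.ncard_le_ncard hsub (Set.toFinite _)
      omega
  obtain ⟨w0, hw0⟩ := Set.ncard_eq_one.mp ht1
  have hzw0 : z = w0 := by
    have : z ∈ ({w0} : Set V) := hw0 ▸ (⟨hxz, hyz⟩ : z ∈ {w | A x w ∧ A y w})
    exact this
  have hTxy : {w | A x w ∧ A y w} = {z} := by rw [hzw0]; exact hw0
  -- the two other out-neighbours of y
  have hcard2 : ({w | A y w} \ {z}).ncard = 2 := by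
    rw [Set.ncard_diff (by simpa using hyz)]
    rw [(hval y).1, Set.ncard_singleton]
  obtain ⟨c, d, hcd, hset⟩ := Set.ncard_eq_two.mp hcard2
  have hc : c ∈ ({w | A y w} \ {z} : Set V) := by rw [hset]; left; rfl
  have hd : d ∈ ({w | A y w} \ {z} : Set V) := by rw [hset]; right; rfl
  have hyc : A y c := hc.1
  have hyd : A y d := hd.1
  have hcz : c ≠ z := by simpa using hc.2
  have hdz : d ≠ z := by simpa using hd.2
  have hxc : ¬ A x c := by
    intro h
    have : c ∈ ({z} : Set V) := hTxy ▸ (⟨h, hyc⟩ : c ∈ {w | A x w ∧ A y w})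
    exact hcz this
  have hxd : ¬ A x d := by
    intro h
    have : d ∈ ({z} : Set V) := hTxy ▸ (⟨h, hyd⟩ : d ∈ {w | A x w ∧ A y w})
    exact hdz this
  have hxnec : x ≠ c := by
    rintro rfl; exact hA x y hxy hyc
  have hxned : x ≠ d := by
    rintro rfl; exact hA x y hxy hyd
  -- 2-geodesic transitivity: g fixing x, y and mapping c to d
  obtain ⟨g, hg, hj⟩ := hgt 2 le_rfl ![x, y, c] ![x, y, d]
    ⟨arcSeq_triple hxy hyc, by simpa using ddist_eq_two hA hxy hyc hxc hxnec⟩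
    ⟨arcSeq_triple hxy hyd, by simpa using ddist_eq_two hA hxy hyd hxd hxned⟩
  have hgx : g x = x := by simpa using hj 0
  have hgy : g y = y := by simpa using hj 1
  have hgc : g c = d := by simpa using hj 2
  have hgz : g z = z := by
    have hmem : g z ∈ {w | A x w ∧ A y w} := by
      constructor
      · have := (hGaut g hg x z).mp hxz; rwa [hgx] at this
      · have := (hGaut g hg y z).mp hyz; rwa [hgy] at this
    have : g z ∈ ({z} : Set V) := hTxy ▸ hmem
    exact this
  have hiff : A z c ↔ A z d := by
    have := hGaut g hg z c
    rwa [hgz, hgc] at this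
  -- common out-neighbour of y and z
  have ht2 : {w | A y w ∧ A z w}.ncard = 1 := (tconst y z x y hyz hxy).trans ht1
  obtain ⟨m, hm⟩ := Set.ncard_eq_one.mp ht2
  have hmmem : m ∈ {w | A y w ∧ A z w} := hm ▸ rfl
  have hym : A y m := hmmem.1
  have hzm : A z m := hmmem.2
  have hmz : m ≠ z := by rintro rfl; exact hirr m hzm
  have hmcd : m = c ∨ m = d := by
    have : m ∈ ({w | A y w} \ {z} : Set V) := ⟨hym, by simpa using hmz⟩
    rw [hset] at this
    simpa using this
  have hzc : A z c := by
    rcases hmcd with rfl | rfl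
    · exact hzm
    · exact hiff.mpr hzm
  have hzd : A z d := hiff.mp hzc
  have hc' : c ∈ ({m} : Set V) := hm ▸ (⟨hyc, hzc⟩ : c ∈ {w | A y w ∧ A z w})
  have hd' : d ∈ ({m} : Set V) := hm ▸ (⟨hyd, hzd⟩ : d ∈ {w | A y w ∧ A z w})
  exact hcd (hc'.trans hd'.symm)

/-- **Lemma 4.3.** Let `Γ` be a finite `(G,2)`-geodesic-transitive digraph of valency `3`.
Then `Γ` is `(G,2)`-arc-transitive. -/
theorem valency_three_geo_to_arc {V : Type*} [Fintype V] (A : V → V → Prop)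
    (G : Subgroup (Equiv.Perm V))
    (hA : ∀ u v : V, A u v → ¬ A v u)
    (hGaut : AutActs A G)
    (hval : HasValency A 3)
    (hgt : GeoTrans A G 2) :
    TwoArcTrans A G := by
  have hns := no_shortcut hA hGaut hval hgt
  intro u v w u' v' w' h1 h2 h3 h4
  have hne : u ≠ w := by
    rintro rfl; exact hA u v h1 h2
  have hne' : u' ≠ w' := by
    rintro rfl; exact hA u' v' h3 h4
  obtain ⟨g, hg, hj⟩ := hgt 2 le_rfl ![u, v, w] ![u', v', w']
    ⟨arcSeq_triple h1 h2, by simpa using ddist_eq_two hA h1 h2 (hns u v w h1 h2) hne⟩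
    ⟨arcSeq_triple h3 h4, by simpa using ddist_eq_two hA h3 h4 (hns u' v' w' h3 h4) hne'⟩
  exact ⟨g, hg, by simpa using hj 0, by simpa using hj 1, by simpa using hj 2⟩

end SGeodesicDigraph
end
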